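/- arXiv:1205.5188 — 3 statements merged into one kernel-verified Lean document; each statement's English description precedes it below -/
import Mathlib

section
/- Let Λ = Λ₁ ∪ … ∪ Λ_N ⊂ ℤ² satisfy conditions (1_Λ)–(5_Λ); for n ∈ Λ_j with 1 ≤ j < N denote by n_spouse ∈ Λ_j and n_child₁, n_child₂ ∈ Λ_{j+1} the unique spouse and children of n given by condition (2_Λ), and for n ∈ Λ_j with 1 < j ≤ N denote by n_sibling ∈ Λ_j and n_parent₁, n_parent₂ ∈ Λ_{j−1} the unique sibling and parents given by condition (3_Λ). Consider the finite ODE system, for n ∈ Λ, −i (d/dt) β_n = −β_n |β_n|² + 2 β_{n_child₁} β_{n_child₂} conj(β_{n_spouse}) + 2 β_{n_parent₁} β_{n_parent₂} conj(β_{n_sibling}), where the children terms are absent for n ∈ Λ_N and the parent terms are absent for n ∈ Λ₁. If β is a solution on an interval I containing 0 with β_n(0) = β_{n′}(0) whenever n and n′ belong to the same generation, then β_n(t) = β_{n′}(t) for all t ∈ I whenever n and n′ belong to the same generation; moreover, setting b_j(t) equal to the common value of β_n(t) for n ∈ Λ_j, the function b = (b₁,…,b_N) is a solution of the toy model. -/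
/-! STATEMENT 7: the invariant subspace where all members of a generation coincide, and the reduction to the toy model. -/

noncomputable section

open Complex

abbrev Z2 := ℤ × ℤ

/-- squared Euclidean norm of a frequency `n ∈ ℤ²` (as an integer) -/
def sqz (n : Z2) : ℤ := n.1 ^ 2 + n.2 ^ 2

/-- `(n₁, n₂, n₃) ∈ A(n)`: the resonant, non-trivial convolution constraints -/
def memA (n₁ n₂ n₃ n : Z2) : Prop :=
  n₁ - n₂ + n₃ = n ∧ sqz n₁ - sqz n₂ + sqz n₃ = sqz n ∧ n₁ ≠ n ∧ n₃ ≠ n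

/-- a rectangle is a quadruple `(n₁, n₂, n₃, n₄)` with `(n₁, n₂, n₃) ∈ A(n₄)` -/
def IsRect (n₁ n₂ n₃ n₄ : Z2) : Prop := memA n₁ n₂ n₃ n₄

/-- the union `Λ = Λ₁ ∪ ⋯ ∪ Λ_N` of the generations -/
def LamUnion (N : ℕ) (Lam : ℕ → Finset Z2) : Finset Z2 :=
  (Finset.Icc 1 N).biUnion Lam

/-- the generations are pairwise disjoint -/
def LamDisjoint (N : ℕ) (Lam : ℕ → Finset Z2) : Prop :=
  ∀ i ∈ Finset.Icc 1 N, ∀ j ∈ Finset.Icc 1 N, i ≠ j → Disjoint (Lam i) (Lam j)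

/-- a nuclear family: a rectangle whose parents `n₁, n₃` lie in some generation `Λ_j`
and whose children `n₂, n₄` lie in the next generation `Λ_{j+1}` -/
def NuclearFamily (N : ℕ) (Lam : ℕ → Finset Z2) (n₁ n₂ n₃ n₄ : Z2) : Prop :=
  IsRect n₁ n₂ n₃ n₄ ∧
    ∃ j : ℕ, 1 ≤ j ∧ j < N ∧ n₁ ∈ Lam j ∧ n₃ ∈ Lam j ∧
      n₂ ∈ Lam (j + 1) ∧ n₄ ∈ Lam (j + 1)

/-- condition `1_Λ` (closure) -/
def Cond1 (N : ℕ) (Lam : ℕ → Finset Z2) : Prop :=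
  ∀ n₁ n₂ n₃ n : Z2, n₁ ∈ LamUnion N Lam → n₂ ∈ LamUnion N Lam →
    n₃ ∈ LamUnion N Lam → memA n₁ n₂ n₃ n → n ∈ LamUnion N Lam

/-- condition `2_Λ` (existence and uniqueness of spouse and children):
every `n₁ ∈ Λ_j`, `1 ≤ j < N`, is a parent of exactly one nuclear family up to
trivial permutations -/
def Cond2 (N : ℕ) (Lam : ℕ → Finset Z2) : Prop :=
  ∀ j : ℕ, 1 ≤ j → j < N → ∀ n₁ ∈ Lam j,
    ∃ n₂ n₃ n₄ : Z2, NuclearFamily N Lam n₁ n₂ n₃ n₄ ∧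
      ∀ m₂ m₃ m₄ : Z2, NuclearFamily N Lam n₁ m₂ m₃ m₄ →
        m₃ = n₃ ∧ ((m₂ = n₂ ∧ m₄ = n₄) ∨ (m₂ = n₄ ∧ m₄ = n₂))

/-- condition `3_Λ` (existence and uniqueness of sibling and parents):
every `n₂ ∈ Λ_{j+1}`, `1 ≤ j < N`, is a child of exactly one nuclear family up to
trivial permutations -/
def Cond3 (N : ℕ) (Lam : ℕ → Finset Z2) : Prop :=
  ∀ j : ℕ, 1 ≤ j → j < N → ∀ n₂ ∈ Lam (j + 1),
    ∃ n₁ n₃ n₄ : Z2, NuclearFamily N Lam n₁ n₂ n₃ n₄ ∧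
      ∀ m₁ m₃ m₄ : Z2, NuclearFamily N Lam m₁ n₂ m₃ m₄ →
        m₄ = n₄ ∧ ((m₁ = n₁ ∧ m₃ = n₃) ∨ (m₁ = n₃ ∧ m₃ = n₁))

/-- condition `4_Λ` (nondegeneracy): the sibling of a frequency is never its spouse -/
def Cond4 (N : ℕ) (Lam : ℕ → Finset Z2) : Prop :=
  ∀ n n₂ n₃ n₄ m₁ m₃ m₄ : Z2,
    NuclearFamily N Lam n n₂ n₃ n₄ → NuclearFamily N Lam m₁ n m₃ m₄ → m₄ ≠ n₃

/-- condition `5_Λ` (faithfulness): apart from the nuclear families, `Λ` contains no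
other rectangle -/
def Cond5 (N : ℕ) (Lam : ℕ → Finset Z2) : Prop :=
  ∀ n₁ n₂ n₃ n₄ : Z2, n₁ ∈ LamUnion N Lam → n₂ ∈ LamUnion N Lam →
    n₃ ∈ LamUnion N Lam → n₄ ∈ LamUnion N Lam → IsRect n₁ n₂ n₃ n₄ →
      NuclearFamily N Lam n₁ n₂ n₃ n₄ ∨ NuclearFamily N Lam n₂ n₁ n₄ n₃

/-- condition `6_Λ` (no spreading): every `n ∉ Λ` is a vertex of at most two
rectangles having exactly two vertices in `Λ` and two vertices out of `Λ` -/
def Cond6 (N : ℕ) (Lam : ℕ → Finset Z2) : Prop :=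
  ∀ n : Z2, n ∉ LamUnion N Lam →
    ∃ V₁ V₂ : Finset Z2, ∀ n₁ n₂ n₃ n₄ : Z2, IsRect n₁ n₂ n₃ n₄ →
      (n = n₁ ∨ n = n₂ ∨ n = n₃ ∨ n = n₄) →
      (({n₁, n₂, n₃, n₄} : Finset Z2).filter (· ∈ LamUnion N Lam)).card = 2 →
      ({n₁, n₂, n₃, n₄} : Finset Z2) = V₁ ∨ ({n₁, n₂, n₃, n₄} : Finset Z2) = V₂

/-- `Λ = Λ₁ ∪ ⋯ ∪ Λ_N` consists of pairwise disjoint generations and satisfies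
conditions `1_Λ`–`6_Λ` -/
def GoodLambda (N : ℕ) (Lam : ℕ → Finset Z2) : Prop :=
  LamDisjoint N Lam ∧ Cond1 N Lam ∧ Cond2 N Lam ∧ Cond3 N Lam ∧
    Cond4 N Lam ∧ Cond5 N Lam ∧ Cond6 N Lam


/-- right-hand side of the toy model ODE for the `j`-th mode (with the convention
`b 0 = b (N+1) = 0` built into the support condition of `IsToySolution`):
`ḃ_j = -i b_j² conj(b_j) + 2i conj(b_j) (b_{j-1}² + b_{j+1}²)`. -/
def toyRHS (b : ℕ → ℂ) (j : ℕ) : ℂ :=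
  -Complex.I * (b j) ^ 2 * (starRingEnd ℂ) (b j)
    + 2 * Complex.I * (starRingEnd ℂ) (b j) * ((b (j - 1)) ^ 2 + (b (j + 1)) ^ 2)

/-- `b` is a solution of the toy model with `N` modes on the time set `I`:
the modes are indexed by `j = 1, …, N`, all other indices carry the value `0`. -/
def IsToySolution (N : ℕ) (I : Set ℝ) (b : ℝ → ℕ → ℂ) : Prop :=
  (∀ t : ℝ, ∀ j : ℕ, j = 0 ∨ N < j → b t j = 0) ∧
  ∀ t ∈ I, ∀ j : ℕ, 1 ≤ j → j ≤ N →
    HasDerivAt (fun s => b s j) (toyRHS (b t) j) t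

/-!
Within a generation, the equations of two frequencies `n, n'` have the same shape: their
spouses, siblings, children and parents lie in the same generations. Hence, on a compact time
interval where `β` is bounded by `M`, the vector `u` of all differences `β_n - β_{n'}` with
`n, n'` in a common generation satisfies `‖u'‖ ≤ 15 M² ‖u‖`, and Grönwall's inequality together
with `u(0) = 0` gives `u ≡ 0`. Once each generation carries a single value `b_j`, the identity
`β |β|² = β β conj β` turns the equation of every `n ∈ Λ_j` into the `j`-th toy-model equation.
-/

theorem eq_zero_of_norm_deriv_le_mul_norm {E : Type*} [NormedAddCommGroup E] [NormedSpace ℝ E]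
    {u F : ℝ → E} {I : Set ℝ} {t₀ : ℝ} (hI : I.OrdConnected) (ht₀ : t₀ ∈ I)
    (hu : ∀ s ∈ I, HasDerivAt u (F s) s)
    (hF : ∀ a b, Set.Icc a b ⊆ I → ∃ K, ∀ s ∈ Set.Icc a b, ‖F s‖ ≤ K * ‖u s‖)
    (hu₀ : u t₀ = 0) : ∀ t ∈ I, u t = 0 := by
  intro t ht
  rcases le_total t₀ t with hle | hle
  · obtain ⟨K, hK⟩ := hF t₀ t (hI.out ht₀ ht)
    exact eq_zero_of_abs_deriv_le_mul_abs_self_of_eq_zero_right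
      (fun s hs => (hu s (hI.out ht₀ ht hs)).continuousAt.continuousWithinAt)
      (fun s hs => (hu s (hI.out ht₀ ht (Set.Ico_subset_Icc_self hs))).hasDerivWithinAt) hu₀
      (fun s hs => hK s (Set.Ico_subset_Icc_self hs)) t (Set.right_mem_Icc.2 hle)
  · -- run time backwards: `s ↦ u (-s)` on `[-t₀, -t]`
    obtain ⟨K, hK⟩ := hF t t₀ (hI.out ht ht₀)
    have hmem : ∀ s ∈ Set.Icc (-t₀) (-t), -s ∈ Set.Icc t t₀ := fun s hs =>
      ⟨by linarith [hs.2], by linarith [hs.1]⟩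
    have hderiv : ∀ s ∈ Set.Icc (-t₀) (-t), HasDerivAt (fun r => u (-r)) (-F (-s)) s :=
      fun s hs => by
        simpa [Function.comp_def] using
          (hu (-s) (hI.out ht ht₀ (hmem s hs))).scomp s (hasDerivAt_neg s)
    simpa using eq_zero_of_abs_deriv_le_mul_abs_self_of_eq_zero_right
      (fun s hs => (hderiv s hs).continuousAt.continuousWithinAt)
      (fun s hs => (hderiv s (Set.Ico_subset_Icc_self hs)).hasDerivWithinAt) (by simpa using hu₀)
      (fun s hs => by simpa using hK (-s) (hmem s (Set.Ico_subset_Icc_self hs))) (-t)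
      (Set.right_mem_Icc.2 (neg_le_neg hle))

theorem IsCompact.exists_bound_of_continuousOn_finset {X α E : Type*} [TopologicalSpace X]
    [SeminormedAddCommGroup E] {K : Set X} (hK : IsCompact K) (S : Finset α) {f : X → α → E}
    (hf : ∀ m ∈ S, ContinuousOn (f · m) K) : ∃ M, ∀ x ∈ K, ∀ m ∈ S, ‖f x m‖ ≤ M := by
  have hbound : ∀ m ∈ S, ∀ᶠ M in Filter.atTop, ∀ x ∈ K, ‖f x m‖ ≤ M := fun m hm => by
    obtain ⟨C, hC⟩ := hK.exists_bound_of_continuousOn (hf m hm)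
    exact (Filter.eventually_ge_atTop C).mono fun M hM x hx => (hC x hx).trans hM
  obtain ⟨M, hM⟩ := ((Filter.eventually_all_finset S).2 hbound).exists
  exact ⟨M, fun x hx m hm => hM m hm x hx⟩

theorem norm_mul_mul_sub_mul_mul_le {R : Type*} [SeminormedRing R] {a b c a' b' c' : R}
    {M d : ℝ} (hb : ‖b‖ ≤ M) (hc : ‖c‖ ≤ M) (ha' : ‖a'‖ ≤ M) (hb' : ‖b'‖ ≤ M)
    (hda : ‖a - a'‖ ≤ d) (hdb : ‖b - b'‖ ≤ d) (hdc : ‖c - c'‖ ≤ d) :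
    ‖a * b * c - a' * b' * c'‖ ≤ 3 * M ^ 2 * d := by
  have hM : 0 ≤ M := (norm_nonneg _).trans hb
  have hd : 0 ≤ d := (norm_nonneg _).trans hda
  have hsplit : a * b * c - a' * b' * c'
      = (a - a') * b * c + a' * (b - b') * c + a' * b' * (c - c') := by
    noncomm_ring
  calc ‖a * b * c - a' * b' * c'‖
      ≤ ‖a - a'‖ * ‖b‖ * ‖c‖ + ‖a'‖ * ‖b - b'‖ * ‖c‖ + ‖a'‖ * ‖b'‖ * ‖c - c'‖ := by
        rw [hsplit]
        exact (norm_add₃_le).trans (add_le_add_three norm_mul₃_le norm_mul₃_le norm_mul₃_le)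
    _ ≤ d * M * M + M * d * M + M * M * d := by gcongr
    _ = 3 * M ^ 2 * d := by ring

theorem Complex.norm_mul_mul_conj_sub_le {a b c a' b' c' : ℂ} {M d : ℝ} (hb : ‖b‖ ≤ M)
    (hc : ‖c‖ ≤ M) (ha' : ‖a'‖ ≤ M) (hb' : ‖b'‖ ≤ M) (hda : ‖a - a'‖ ≤ d) (hdb : ‖b - b'‖ ≤ d)
    (hdc : ‖c - c'‖ ≤ d) :
    ‖a * b * (starRingEnd ℂ) c - a' * b' * (starRingEnd ℂ) c'‖ ≤ 3 * M ^ 2 * d :=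
  norm_mul_mul_sub_mul_mul_le hb (by rwa [Complex.norm_conj]) ha' hb' hda hdb
    (by rwa [← map_sub, Complex.norm_conj])

theorem norm_ite_sub_ite_le {E : Type*} [SeminormedAddCommGroup E] {p : Prop} [Decidable p]
    {a b : E} {K : ℝ} (hK : 0 ≤ K) (h : p → ‖a - b‖ ≤ K) :
    ‖(if p then a else 0) - (if p then b else 0)‖ ≤ K := by
  split_ifs with hp
  · exact h hp
  · simpa using hK

section Generations

variable {N : ℕ} {Lam : ℕ → Finset Z2}

theorem LamDisjoint.eq_of_mem (hdisj : LamDisjoint N Lam) {i j : ℕ} {n : Z2}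
    (hi : i ∈ Finset.Icc 1 N) (hj : j ∈ Finset.Icc 1 N) (hni : n ∈ Lam i) (hnj : n ∈ Lam j) :
    i = j := by
  by_contra hij
  exact Finset.disjoint_left.1 (hdisj i hi j hj hij) hni hnj

theorem NuclearFamily.mem_of_parent_mem {n₁ n₂ n₃ n₄ : Z2}
    (hfam : NuclearFamily N Lam n₁ n₂ n₃ n₄) (hdisj : LamDisjoint N Lam) {j : ℕ}
    (hj : j ∈ Finset.Icc 1 N) (hn₁ : n₁ ∈ Lam j) :
    n₃ ∈ Lam j ∧ n₂ ∈ Lam (j + 1) ∧ n₄ ∈ Lam (j + 1) := by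
  obtain ⟨-, k, hk, hkN, hk₁, hk₃, hk₂, hk₄⟩ := hfam
  obtain rfl := hdisj.eq_of_mem (Finset.mem_Icc.2 ⟨hk, hkN.le⟩) hj hk₁ hn₁
  exact ⟨hk₃, hk₂, hk₄⟩

theorem NuclearFamily.mem_of_child_mem {n₁ n₂ n₃ n₄ : Z2}
    (hfam : NuclearFamily N Lam n₁ n₂ n₃ n₄) (hdisj : LamDisjoint N Lam) {j : ℕ}
    (hj : j + 1 ∈ Finset.Icc 1 N) (hn₂ : n₂ ∈ Lam (j + 1)) :
    n₁ ∈ Lam j ∧ n₃ ∈ Lam j ∧ n₄ ∈ Lam (j + 1) := by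
  obtain ⟨-, k, hk, hkN, hk₁, hk₃, hk₂, hk₄⟩ := hfam
  obtain rfl : k = j := Nat.succ_injective <|
    hdisj.eq_of_mem (Finset.mem_Icc.2 ⟨by omega, hkN⟩) hj hk₂ hn₂
  exact ⟨hk₁, hk₃, hk₄⟩

variable (N Lam) in
def RespectsGenerations (spouse child₁ child₂ sibling parent₁ parent₂ : Z2 → Z2) : Prop :=
  (∀ j : ℕ, 1 ≤ j → j < N → ∀ n ∈ Lam j,
    spouse n ∈ Lam j ∧ child₁ n ∈ Lam (j + 1) ∧ child₂ n ∈ Lam (j + 1)) ∧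
  (∀ j : ℕ, 1 ≤ j → j < N → ∀ n ∈ Lam (j + 1),
    sibling n ∈ Lam (j + 1) ∧ parent₁ n ∈ Lam j ∧ parent₂ n ∈ Lam j)

theorem respectsGenerations_of_nuclearFamily (hdisj : LamDisjoint N Lam)
    {spouse child₁ child₂ sibling parent₁ parent₂ : Z2 → Z2}
    (hfam : ∀ j : ℕ, 1 ≤ j → j < N → ∀ n ∈ Lam j,
      NuclearFamily N Lam n (child₁ n) (spouse n) (child₂ n))
    (hfam' : ∀ j : ℕ, 1 ≤ j → j < N → ∀ n ∈ Lam (j + 1),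
      NuclearFamily N Lam (parent₁ n) n (parent₂ n) (sibling n)) :
    RespectsGenerations N Lam spouse child₁ child₂ sibling parent₁ parent₂ := by
  refine ⟨fun j hj hjN n hn => ?_, fun j hj hjN n hn => ?_⟩
  · exact (hfam j hj hjN n hn).mem_of_parent_mem hdisj (Finset.mem_Icc.2 ⟨hj, hjN.le⟩) hn
  · obtain ⟨hp₁, hp₂, hsib⟩ :=
      (hfam' j hj hjN n hn).mem_of_child_mem hdisj (Finset.mem_Icc.2 ⟨by omega, hjN⟩) hn
    exact ⟨hsib, hp₁, hp₂⟩

end Generations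

section FamilySystem

variable {N : ℕ} {Lam : ℕ → Finset Z2} {spouse child₁ child₂ sibling parent₁ parent₂ : Z2 → Z2}

variable (N spouse child₁ child₂ sibling parent₁ parent₂) in
def familyRHS (x : Z2 → ℂ) (j : ℕ) (n : Z2) : ℂ :=
  Complex.I * (-(x n) * (‖x n‖ : ℂ) ^ 2
    + (if j < N then 2 * x (child₁ n) * x (child₂ n) * (starRingEnd ℂ) (x (spouse n)) else 0)
    + (if 2 ≤ j then 2 * x (parent₁ n) * x (parent₂ n) * (starRingEnd ℂ) (x (sibling n))
      else 0))

theorem neg_mul_norm_sq (z : ℂ) : -z * (‖z‖ : ℂ) ^ 2 = -(z * z * (starRingEnd ℂ) z) := by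
  rw [mul_assoc, Complex.mul_conj', neg_mul]

theorem norm_familyRHS_sub_le
    (hgen : RespectsGenerations N Lam spouse child₁ child₂ sibling parent₁ parent₂)
    {x : Z2 → ℂ} {M d : ℝ} (hM : ∀ m ∈ LamUnion N Lam, ‖x m‖ ≤ M)
    (hd : ∀ j : ℕ, 1 ≤ j → j ≤ N → ∀ n ∈ Lam j, ∀ n' ∈ Lam j, ‖x n - x n'‖ ≤ d)
    {j : ℕ} (hj : 1 ≤ j) (hjN : j ≤ N) {n n' : Z2} (hn : n ∈ Lam j) (hn' : n' ∈ Lam j) :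
    ‖familyRHS N spouse child₁ child₂ sibling parent₁ parent₂ x j n
      - familyRHS N spouse child₁ child₂ sibling parent₁ parent₂ x j n'‖ ≤ 15 * M ^ 2 * d := by
  have hMk : ∀ k, 1 ≤ k → k ≤ N → ∀ m ∈ Lam k, ‖x m‖ ≤ M := fun k hk hkN m hm =>
    hM m (Finset.mem_biUnion.2 ⟨k, Finset.mem_Icc.2 ⟨hk, hkN⟩, hm⟩)
  have hK : 0 ≤ 6 * M ^ 2 * d := by
    have := (norm_nonneg _).trans (hd j hj hjN n hn n hn)
    positivity
  have htwice : ∀ a b c a' b' c' : ℂ,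
      2 * a * b * (starRingEnd ℂ) c - 2 * a' * b' * (starRingEnd ℂ) c'
        = 2 * (a * b * (starRingEnd ℂ) c - a' * b' * (starRingEnd ℂ) c') := by
    intros; ring
  have hself : ‖-(x n) * (‖x n‖ : ℂ) ^ 2 - -(x n') * (‖x n'‖ : ℂ) ^ 2‖ ≤ 3 * M ^ 2 * d := by
    rw [neg_mul_norm_sq, neg_mul_norm_sq, neg_sub_neg, norm_sub_rev]
    have hdn := hd j hj hjN n hn n' hn'
    exact Complex.norm_mul_mul_conj_sub_le (hMk j hj hjN n hn) (hMk j hj hjN n hn)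
      (hMk j hj hjN n' hn') (hMk j hj hjN n' hn') hdn hdn hdn
  have hchildren := norm_ite_sub_ite_le hK (p := j < N) fun hjN' => by
    obtain ⟨hs, hc₁, hc₂⟩ := hgen.1 j hj hjN' n hn
    obtain ⟨hs', hc₁', hc₂'⟩ := hgen.1 j hj hjN' n' hn'
    have := Complex.norm_mul_mul_conj_sub_le (hMk _ (by omega) (by omega) _ hc₂)
      (hMk j hj hjN _ hs) (hMk _ (by omega) (by omega) _ hc₁') (hMk _ (by omega) (by omega) _ hc₂')
      (hd _ (by omega) (by omega) _ hc₁ _ hc₁') (hd _ (by omega) (by omega) _ hc₂ _ hc₂')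
      (hd j hj hjN _ hs _ hs')
    rw [htwice, norm_mul, Complex.norm_two]
    linarith
  have hparents := norm_ite_sub_ite_le hK (p := 2 ≤ j) fun h2j => by
    obtain ⟨k, rfl⟩ : ∃ k, j = k + 1 := ⟨j - 1, by omega⟩
    obtain ⟨hs, hp₁, hp₂⟩ := hgen.2 k (by omega) (by omega) n hn
    obtain ⟨hs', hp₁', hp₂'⟩ := hgen.2 k (by omega) (by omega) n' hn'
    have := Complex.norm_mul_mul_conj_sub_le (hMk _ (by omega) (by omega) _ hp₂)
      (hMk _ hj hjN _ hs) (hMk _ (by omega) (by omega) _ hp₁') (hMk _ (by omega) (by omega) _ hp₂')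
      (hd _ (by omega) (by omega) _ hp₁ _ hp₁') (hd _ (by omega) (by omega) _ hp₂ _ hp₂')
      (hd _ hj hjN _ hs _ hs')
    rw [htwice, norm_mul, Complex.norm_two]
    linarith
  rw [familyRHS, familyRHS, ← mul_sub, norm_mul, Complex.norm_I, one_mul,
    add_sub_add_comm, add_sub_add_comm]
  calc _ ≤ _ := norm_add₃_le
    _ ≤ 3 * M ^ 2 * d + 6 * M ^ 2 * d + 6 * M ^ 2 * d := add_le_add_three hself hchildren hparents
    _ = 15 * M ^ 2 * d := by ring

theorem familyRHS_eq_toyRHS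
    (hgen : RespectsGenerations N Lam spouse child₁ child₂ sibling parent₁ parent₂)
    {x : Z2 → ℂ} {b : ℕ → ℂ} (hb₀ : b 0 = 0) (hbN : b (N + 1) = 0)
    (hxb : ∀ j : ℕ, 1 ≤ j → j ≤ N → ∀ n ∈ Lam j, x n = b j)
    {j : ℕ} (hj : 1 ≤ j) (hjN : j ≤ N) {n : Z2} (hn : n ∈ Lam j) :
    familyRHS N spouse child₁ child₂ sibling parent₁ parent₂ x j n = toyRHS b j := by
  have hchildren : (if j < N then
      2 * x (child₁ n) * x (child₂ n) * (starRingEnd ℂ) (x (spouse n)) else 0)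
        = 2 * b (j + 1) ^ 2 * (starRingEnd ℂ) (b j) := by
    split_ifs with hjN'
    · obtain ⟨hs, hc₁, hc₂⟩ := hgen.1 j hj hjN' n hn
      rw [hxb _ (by omega) (by omega) _ hc₁, hxb _ (by omega) (by omega) _ hc₂,
        hxb j hj hjN _ hs]
      ring
    · rw [show j + 1 = N + 1 by omega, hbN]
      ring
  have hparents : (if 2 ≤ j then
      2 * x (parent₁ n) * x (parent₂ n) * (starRingEnd ℂ) (x (sibling n)) else 0)
        = 2 * b (j - 1) ^ 2 * (starRingEnd ℂ) (b j) := by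
    split_ifs with h2j
    · obtain ⟨k, rfl⟩ : ∃ k, j = k + 1 := ⟨j - 1, by omega⟩
      obtain ⟨hs, hp₁, hp₂⟩ := hgen.2 k (by omega) (by omega) n hn
      rw [Nat.add_sub_cancel, hxb _ (by omega) (by omega) _ hp₁,
        hxb _ (by omega) (by omega) _ hp₂, hxb _ hj hjN _ hs]
      ring
    · rw [show j - 1 = 0 by omega, hb₀]
      ring
  rw [familyRHS, toyRHS, neg_mul_norm_sq, hchildren, hparents, hxb j hj hjN n hn]
  ring

variable (N Lam) in
def ConstantOnGenerations (x : Z2 → ℂ) : Prop :=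
  ∀ j : ℕ, 1 ≤ j → j ≤ N → ∀ n ∈ Lam j, ∀ n' ∈ Lam j, x n = x n'

variable (N Lam) in
def generationDiff (x : Z2 → ℂ) : (Σ j : Finset.Icc 1 N, Lam j.1 × Lam j.1) → ℂ :=
  fun i => x i.2.1 - x i.2.2

theorem norm_sub_le_norm_generationDiff (x : Z2 → ℂ) {j : ℕ} (hj : 1 ≤ j) (hjN : j ≤ N)
    {n n' : Z2} (hn : n ∈ Lam j) (hn' : n' ∈ Lam j) :
    ‖x n - x n'‖ ≤ ‖generationDiff N Lam x‖ :=
  norm_le_pi_norm (generationDiff N Lam x) ⟨⟨j, Finset.mem_Icc.2 ⟨hj, hjN⟩⟩, ⟨n, hn⟩, ⟨n', hn'⟩⟩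

theorem generationDiff_eq_zero_iff {x : Z2 → ℂ} :
    generationDiff N Lam x = 0 ↔ ConstantOnGenerations N Lam x := by
  constructor
  · intro h j hj hjN n hn n' hn'
    exact sub_eq_zero.1 (congrFun h ⟨⟨j, Finset.mem_Icc.2 ⟨hj, hjN⟩⟩, ⟨n, hn⟩, ⟨n', hn'⟩⟩)
  · refine fun h => funext ?_
    rintro ⟨⟨j, hj⟩, ⟨n, hn⟩, ⟨n', hn'⟩⟩
    rw [Finset.mem_Icc] at hj
    exact sub_eq_zero.2 (h j hj.1 hj.2 n hn n' hn')

end FamilySystem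

section Solutions

variable {N : ℕ} {Lam : ℕ → Finset Z2} {spouse child₁ child₂ sibling parent₁ parent₂ : Z2 → Z2}
  {I : Set ℝ} {β : ℝ → Z2 → ℂ}

theorem constantOnGenerations_of_hasDerivAt
    (hgen : RespectsGenerations N Lam spouse child₁ child₂ sibling parent₁ parent₂)
    (hI : I.OrdConnected) {t₀ : ℝ} (ht₀ : t₀ ∈ I)
    (hβ : ∀ t ∈ I, ∀ j : ℕ, 1 ≤ j → j ≤ N → ∀ n ∈ Lam j, HasDerivAt (fun s => β s n)
      (familyRHS N spouse child₁ child₂ sibling parent₁ parent₂ (β t) j n) t)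
    (hinit : ConstantOnGenerations N Lam (β t₀)) :
    ∀ t ∈ I, ConstantOnGenerations N Lam (β t) := by
  let rhs := familyRHS N spouse child₁ child₂ sibling parent₁ parent₂
  suffices h : ∀ t ∈ I, generationDiff N Lam (β t) = 0 from
    fun t ht => generationDiff_eq_zero_iff.1 (h t ht)
  refine eq_zero_of_norm_deriv_le_mul_norm hI ht₀
    (F := fun s i => rhs (β s) i.1 i.2.1 - rhs (β s) i.1 i.2.2) ?_ ?_
    (generationDiff_eq_zero_iff.2 hinit)
  · intro s hs
    rw [hasDerivAt_pi]
    rintro ⟨⟨j, hj⟩, ⟨n, hn⟩, ⟨n', hn'⟩⟩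
    rw [Finset.mem_Icc] at hj
    exact (hβ s hs j hj.1 hj.2 n hn).sub (hβ s hs j hj.1 hj.2 n' hn')
  · intro a b hab
    have hcont : ∀ m ∈ LamUnion N Lam, ContinuousOn (β · m) (Set.Icc a b) := fun m hm s hs => by
      obtain ⟨j, hj, hmj⟩ := Finset.mem_biUnion.1 hm
      rw [Finset.mem_Icc] at hj
      exact (hβ s (hab hs) j hj.1 hj.2 m hmj).continuousAt.continuousWithinAt
    obtain ⟨M, hM⟩ := isCompact_Icc.exists_bound_of_continuousOn_finset _ hcont
    refine ⟨15 * M ^ 2, fun s hs => (pi_norm_le_iff_of_nonneg (by positivity)).2 ?_⟩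
    rintro ⟨⟨j, hj⟩, ⟨n, hn⟩, ⟨n', hn'⟩⟩
    rw [Finset.mem_Icc] at hj
    exact norm_familyRHS_sub_le hgen (hM s hs)
      (fun k hk hkN m hm m' hm' => norm_sub_le_norm_generationDiff _ hk hkN hm hm')
      hj.1 hj.2 hn hn'

variable (N Lam β) in
def generationValue (t : ℝ) (j : ℕ) : ℂ :=
  if h : 1 ≤ j ∧ j ≤ N ∧ (Lam j).Nonempty then β t h.2.2.choose else 0

theorem generationValue_eq {t : ℝ} (hconst : ConstantOnGenerations N Lam (β t)) {j : ℕ}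
    (hj : 1 ≤ j) (hjN : j ≤ N) {n : Z2} (hn : n ∈ Lam j) :
    generationValue N Lam β t j = β t n := by
  have h : 1 ≤ j ∧ j ≤ N ∧ (Lam j).Nonempty := ⟨hj, hjN, n, hn⟩
  rw [generationValue, dif_pos h]
  exact hconst j hj hjN _ h.2.2.choose_spec n hn

theorem generationValue_eq_zero (t : ℝ) {j : ℕ} (hj : j = 0 ∨ N < j) :
    generationValue N Lam β t j = 0 :=
  dif_neg fun h => by omega

theorem isToySolution_generationValue
    (hgen : RespectsGenerations N Lam spouse child₁ child₂ sibling parent₁ parent₂)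
    (hβ : ∀ t ∈ I, ∀ j : ℕ, 1 ≤ j → j ≤ N → ∀ n ∈ Lam j, HasDerivAt (fun s => β s n)
      (familyRHS N spouse child₁ child₂ sibling parent₁ parent₂ (β t) j n) t)
    (hconst : ∀ t ∈ I, ConstantOnGenerations N Lam (β t)) :
    IsToySolution N I (generationValue N Lam β) := by
  refine ⟨fun t j hj => generationValue_eq_zero t hj, fun t ht j hj hjN => ?_⟩
  by_cases hne : (Lam j).Nonempty
  · have hvalue : (generationValue N Lam β · j) = (β · hne.choose) :=
      funext fun s => dif_pos ⟨hj, hjN, hne⟩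
    rw [hvalue, ← familyRHS_eq_toyRHS hgen (generationValue_eq_zero t (Or.inl rfl))
      (generationValue_eq_zero t (Or.inr N.lt_succ_self))
      (fun k hk hkN m hm => (generationValue_eq (hconst t ht) hk hkN hm).symm) hj hjN
      hne.choose_spec]
    exact hβ t ht j hj hjN _ hne.choose_spec
  · have hvalue : (generationValue N Lam β · j) = fun _ => 0 :=
      funext fun s => dif_neg fun h => hne h.2.2
    rw [hvalue, toyRHS, congrFun hvalue t]
    simpa using hasDerivAt_const t (0 : ℂ)

end Solutions

theorem stmt7_general (N : ℕ) (Lam : ℕ → Finset Z2)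
    (hdisj : LamDisjoint N Lam)
    -- the spouse/children/sibling/parents selection functions provided by `2_Λ`, `3_Λ`
    (spouse child₁ child₂ sibling parent₁ parent₂ : Z2 → Z2)
    (hfam : ∀ j : ℕ, 1 ≤ j → j < N → ∀ n ∈ Lam j,
      NuclearFamily N Lam n (child₁ n) (spouse n) (child₂ n))
    (hfam' : ∀ j : ℕ, 1 ≤ j → j < N → ∀ n ∈ Lam (j + 1),
      NuclearFamily N Lam (parent₁ n) n (parent₂ n) (sibling n))
    (I : Set ℝ) (hI : I.OrdConnected) (h0 : (0 : ℝ) ∈ I)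
    (β : ℝ → Z2 → ℂ)
    -- `β` solves the finite ODE system on `Λ`
    (hβ : ∀ t ∈ I, ∀ j : ℕ, 1 ≤ j → j ≤ N → ∀ n ∈ Lam j,
      HasDerivAt (fun s => β s n)
        (Complex.I * (-(β t n) * (‖β t n‖ : ℂ) ^ 2
          + (if j < N then
              2 * β t (child₁ n) * β t (child₂ n) * (starRingEnd ℂ) (β t (spouse n))
            else 0)
          + (if 2 ≤ j then
              2 * β t (parent₁ n) * β t (parent₂ n) * (starRingEnd ℂ) (β t (sibling n))
            else 0))) t)
    -- at time `0` all members of a generation take the same value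
    (hinit : ∀ j : ℕ, 1 ≤ j → j ≤ N → ∀ n ∈ Lam j, ∀ n' ∈ Lam j, β 0 n = β 0 n') :
    -- then this persists for all times, and the common values solve the toy model
    (∀ t ∈ I, ∀ j : ℕ, 1 ≤ j → j ≤ N → ∀ n ∈ Lam j, ∀ n' ∈ Lam j, β t n = β t n') ∧
    ∃ b : ℝ → ℕ → ℂ,
      (∀ t ∈ I, ∀ j : ℕ, 1 ≤ j → j ≤ N → ∀ n ∈ Lam j, b t j = β t n) ∧
      IsToySolution N I b := by
  have hgen := respectsGenerations_of_nuclearFamily hdisj hfam hfam'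
  have hconst := constantOnGenerations_of_hasDerivAt hgen hI h0 hβ hinit
  exact ⟨hconst, generationValue N Lam β,
    fun t ht j hj hjN n hn => generationValue_eq (hconst t ht) hj hjN hn,
    isToySolution_generationValue hgen hβ hconst⟩

theorem stmt7 (N : ℕ) (Lam : ℕ → Finset Z2)
    (hdisj : LamDisjoint N Lam) (h1 : Cond1 N Lam) (h2 : Cond2 N Lam)
    (h3 : Cond3 N Lam) (h4 : Cond4 N Lam) (h5 : Cond5 N Lam)
    -- the spouse/children/sibling/parents selection functions provided by `2_Λ`, `3_Λ`
    (spouse child₁ child₂ sibling parent₁ parent₂ : Z2 → Z2)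
    (hfam : ∀ j : ℕ, 1 ≤ j → j < N → ∀ n ∈ Lam j,
      NuclearFamily N Lam n (child₁ n) (spouse n) (child₂ n))
    (hfam' : ∀ j : ℕ, 1 ≤ j → j < N → ∀ n ∈ Lam (j + 1),
      NuclearFamily N Lam (parent₁ n) n (parent₂ n) (sibling n))
    (I : Set ℝ) (hI : I.OrdConnected) (h0 : (0 : ℝ) ∈ I)
    (β : ℝ → Z2 → ℂ)
    -- `β` solves the finite ODE system on `Λ`
    (hβ : ∀ t ∈ I, ∀ j : ℕ, 1 ≤ j → j ≤ N → ∀ n ∈ Lam j,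
      HasDerivAt (fun s => β s n)
        (Complex.I * (-(β t n) * (‖β t n‖ : ℂ) ^ 2
          + (if j < N then
              2 * β t (child₁ n) * β t (child₂ n) * (starRingEnd ℂ) (β t (spouse n))
            else 0)
          + (if 2 ≤ j then
              2 * β t (parent₁ n) * β t (parent₂ n) * (starRingEnd ℂ) (β t (sibling n))
            else 0))) t)
    -- at time `0` all members of a generation take the same value
    (hinit : ∀ j : ℕ, 1 ≤ j → j ≤ N → ∀ n ∈ Lam j, ∀ n' ∈ Lam j, β 0 n = β 0 n') :
    -- then this persists for all times, and the common values solve the toy model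
    (∀ t ∈ I, ∀ j : ℕ, 1 ≤ j → j ≤ N → ∀ n ∈ Lam j, ∀ n' ∈ Lam j, β t n = β t n') ∧
    ∃ b : ℝ → ℕ → ℂ,
      (∀ t ∈ I, ∀ j : ℕ, 1 ≤ j → j ≤ N → ∀ n ∈ Lam j, b t j = β t n) ∧
      IsToySolution N I b :=
  stmt7_general N Lam hdisj spouse child₁ child₂ sibling parent₁ parent₂ hfam hfam' I hI h0 β hβ
    hinit

end
end

section
/- Along every solution b : I → ℂ^N of the toy model, both the Hamiltonian h(b(t)) and the mass M(b(t)) are constant in t. -/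
/-! The toy model is the Hamiltonian flow `ḃ_j = -2i ∂h/∂b̄_j` of the real-valued `h`.
Along a solution, `dh/dt = 2 Re Σ_j ∂h/∂b̄_j · conj ḃ_j = 2 Re (2i Σ_j |∂h/∂b̄_j|²) = 0`.
Since `h` is homogeneous of degree two in `b̄`, Euler's identity gives `Σ_j b̄_j ∂h/∂b̄_j = 2h`,
which is real, so `dM/dt = 2 Re Σ_j b̄_j ḃ_j = 2 Re (-4i h) = 0`. -/

noncomputable section

open Complex

/-- the Hamiltonian of the toy model -/
def hToy (N : ℕ) (b : ℕ → ℂ) : ℂ :=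
  (1 / 4) * ∑ j ∈ Finset.Icc 1 N, (‖b j‖ : ℂ) ^ 4
    - (1 / 2) * ∑ j ∈ Finset.Icc 2 N,
        ((starRingEnd ℂ) (b j) ^ 2 * (b (j - 1)) ^ 2
          + (b j) ^ 2 * (starRingEnd ℂ) (b (j - 1)) ^ 2)

/-- the mass of the toy model -/
def massToy (N : ℕ) (b : ℕ → ℂ) : ℝ := ∑ j ∈ Finset.Icc 1 N, ‖b j‖ ^ 2

open ComplexConjugate Finset

theorem Set.OrdConnected.eq_of_hasDerivAt_eq_zero {E : Type*} [NormedAddCommGroup E]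
    [NormedSpace ℝ E] {f : ℝ → E} {s : Set ℝ} (hs : s.OrdConnected)
    (hf : ∀ x ∈ s, HasDerivAt f 0 x) {x y : ℝ} (hx : x ∈ s) (hy : y ∈ s) : f x = f y := by
  have h := (convex_iff_ordConnected.mpr hs).norm_image_sub_le_of_norm_hasDerivWithin_le
    (fun z hz => (hf z hz).hasDerivWithinAt) (fun _ _ => norm_zero.le) hy hx
  rwa [zero_mul, norm_le_zero_iff, sub_eq_zero] at h

theorem Finset.sum_Icc_two_eq_sum_Icc_one {M : Type*} [AddCommMonoid M] (N : ℕ) {f : ℕ → M}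
    (h : f 1 = 0) : ∑ j ∈ Icc 2 N, f j = ∑ j ∈ Icc 1 N, f j := by
  refine sum_subset (Icc_subset_Icc_left one_le_two) fun j hj hj' => ?_
  obtain rfl : j = 1 := by simp only [mem_Icc] at hj hj'; omega
  exact h

theorem Finset.sum_Icc_two_pred_eq_sum_Icc_one_succ {M : Type*} [AddCommMonoid M] (N : ℕ)
    {g : ℕ → ℕ → M} (h : g N (N + 1) = 0) :
    ∑ j ∈ Icc 2 N, g (j - 1) j = ∑ j ∈ Icc 1 N, g j (j + 1) := by
  rcases N with _ | N
  · simp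
  rw [sum_Icc_succ_top (by omega : 1 ≤ N + 1) fun j => g j (j + 1), h, add_zero]
  refine sum_nbij' (· - 1) (· + 1) ?_ ?_ ?_ ?_ ?_ <;> intro j hj <;>
    simp only [mem_Icc] at hj ⊢
  all_goals first | omega | (congr 1; omega)

/-- The Wirtinger derivative `∂h/∂b̄_j` of the Hamiltonian. -/
def toyGrad (z : ℕ → ℂ) (j : ℕ) : ℂ :=
  z j ^ 2 * conj (z j) / 2 - conj (z j) * (z (j - 1) ^ 2 + z (j + 1) ^ 2)

theorem toyRHS_eq_neg_two_I_mul_toyGrad (z : ℕ → ℂ) (j : ℕ) :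
    toyRHS z j = -2 * I * toyGrad z j := by
  simp only [toyRHS, toyGrad]
  ring

theorem ofReal_norm_pow_four (w : ℂ) : (‖w‖ : ℂ) ^ 4 = (w * conj w) ^ 2 := by
  rw [mul_conj, normSq_eq_norm_sq]
  push_cast
  ring

theorem conj_hToy (N : ℕ) (z : ℕ → ℂ) : conj (hToy N z) = hToy N z := by
  simp only [hToy, map_sub, map_mul, map_sum, map_add, map_pow, conj_ofReal, conj_conj,
    map_div₀, map_one, map_ofNat]
  congr 2
  exact sum_congr rfl fun j _ => add_comm _ _

/-- Euler's identity for `h`, homogeneous of degree two in `b̄`. -/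
theorem sum_conj_mul_toyGrad (N : ℕ) (z : ℕ → ℂ) (h0 : z 0 = 0) (hN : z (N + 1) = 0) :
    ∑ j ∈ Icc 1 N, conj (z j) * toyGrad z j = 2 * hToy N z := by
  have hbonds := sum_Icc_two_pred_eq_sum_Icc_one_succ N
    (g := fun i k => z k ^ 2 * conj (z i) ^ 2) (by simp [hN])
  rw [hToy, sum_add_distrib, hbonds,
    sum_Icc_two_eq_sum_Icc_one N (f := fun j => conj (z j) ^ 2 * z (j - 1) ^ 2) (by simp [h0])]
  simp only [toyGrad, ofReal_norm_pow_four, mul_sum, ← sum_add_distrib, ← sum_sub_distrib]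
  exact sum_congr rfl fun j _ => by ring

theorem hasDerivAt_hToy (N : ℕ) {b : ℝ → ℕ → ℂ} {v : ℕ → ℂ} {t : ℝ}
    (hb : ∀ j, HasDerivAt (fun s => b s j) (v j) t) (h0 : b t 0 = 0) (hN : b t (N + 1) = 0) :
    HasDerivAt (fun s => hToy N (b s))
      (∑ j ∈ Icc 1 N, (conj (toyGrad (b t) j) * v j + toyGrad (b t) j * conj (v j))) t := by
  set z := b t
  have hc : ∀ j, HasDerivAt (fun s => conj (b s j)) (conj (v j)) t := fun j => (hb j).star
  have hsite : ∀ j, HasDerivAt (fun s => (‖b s j‖ : ℂ) ^ 4)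
      (2 * (z j * conj (z j)) * (v j * conj (z j) + z j * conj (v j))) t := by
    intro j
    simp only [ofReal_norm_pow_four]
    exact (((hb j).fun_mul (hc j)).fun_pow 2).congr_deriv (by ring)
  have hbond : ∀ j, HasDerivAt
      (fun s => conj (b s j) ^ 2 * b s (j - 1) ^ 2 + b s j ^ 2 * conj (b s (j - 1)) ^ 2)
      ((2 * conj (z j) * conj (v j) * z (j - 1) ^ 2 + 2 * z j * v j * conj (z (j - 1)) ^ 2)
        + (2 * conj (z j) ^ 2 * z (j - 1) * v (j - 1)
          + 2 * z j ^ 2 * conj (z (j - 1)) * conj (v (j - 1)))) t := fun j =>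
    ((((hc j).fun_pow 2).fun_mul ((hb (j - 1)).fun_pow 2)).fun_add
      (((hb j).fun_pow 2).fun_mul ((hc (j - 1)).fun_pow 2))).congr_deriv (by ring)
  refine (((HasDerivAt.fun_sum fun j _ => hsite j).const_mul (1 / 4 : ℂ)).sub
    ((HasDerivAt.fun_sum fun j _ => hbond j).const_mul (1 / 2 : ℂ))).congr_deriv ?_
  have hleft := sum_Icc_two_pred_eq_sum_Icc_one_succ N
    (g := fun i k => 2 * conj (z k) ^ 2 * z i * v i + 2 * z k ^ 2 * conj (z i) * conj (v i))
    (by simp [z, hN])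
  rw [sum_add_distrib, hleft, sum_Icc_two_eq_sum_Icc_one N (by simp [z, h0])]
  simp only [toyGrad, mul_sum, ← sum_add_distrib, ← sum_sub_distrib]
  refine sum_congr rfl fun j _ => ?_
  simp only [map_sub, map_mul, map_add, map_pow, map_div₀, map_ofNat, conj_conj]
  ring

theorem hasDerivAt_massToy (N : ℕ) {b : ℝ → ℕ → ℂ} {v : ℕ → ℂ} {t : ℝ}
    (hb : ∀ j, HasDerivAt (fun s => b s j) (v j) t) :
    HasDerivAt (fun s => massToy N (b s)) (2 * (∑ j ∈ Icc 1 N, conj (b t j) * v j).re) t := by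
  refine (HasDerivAt.fun_sum fun j _ => (hb j).norm_sq).congr_deriv ?_
  rw [re_sum, mul_sum]
  exact sum_congr rfl fun j _ => by rw [Complex.inner, mul_comm (v j)]

namespace IsToySolution

variable {N : ℕ} {I : Set ℝ} {b : ℝ → ℕ → ℂ} {t : ℝ}

theorem apply_zero (hb : IsToySolution N I b) (t : ℝ) : b t 0 = 0 :=
  hb.1 t 0 (.inl rfl)

theorem apply_succ_self (hb : IsToySolution N I b) (t : ℝ) : b t (N + 1) = 0 :=
  hb.1 t (N + 1) (.inr N.lt_succ_self)

theorem hasDerivAt (hb : IsToySolution N I b) (ht : t ∈ I) (j : ℕ) :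
    HasDerivAt (fun s => b s j) (toyRHS (b t) j) t := by
  by_cases hj : 1 ≤ j ∧ j ≤ N
  · exact hb.2 t ht j hj.1 hj.2
  · have hzero : ∀ s, b s j = 0 := fun s => hb.1 s j (by omega)
    simpa [hzero, toyRHS] using hasDerivAt_const t (0 : ℂ)

theorem hasDerivAt_hToy (hb : IsToySolution N I b) (ht : t ∈ I) :
    HasDerivAt (fun s => hToy N (b s)) 0 t := by
  convert _root_.hasDerivAt_hToy N (hb.hasDerivAt ht) (hb.apply_zero t)
    (hb.apply_succ_self t) using 1
  refine (sum_eq_zero fun j _ => ?_).symm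
  rw [toyRHS_eq_neg_two_I_mul_toyGrad]
  simp only [map_mul, map_neg, map_ofNat, conj_I]
  ring

theorem hasDerivAt_massToy (hb : IsToySolution N I b) (ht : t ∈ I) :
    HasDerivAt (fun s => massToy N (b s)) 0 t := by
  convert _root_.hasDerivAt_massToy N (hb.hasDerivAt ht) using 1
  simp_rw [toyRHS_eq_neg_two_I_mul_toyGrad, mul_left_comm _ (-2 * Complex.I), ← mul_sum,
    sum_conj_mul_toyGrad N (b t) (hb.apply_zero t) (hb.apply_succ_self t)]
  have him : (hToy N (b t)).im = 0 := conj_eq_iff_im.mp (conj_hToy N (b t))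
  simp [him]

end IsToySolution

theorem stmt8 (N : ℕ) (I : Set ℝ) (hI : I.OrdConnected)
    (b : ℝ → ℕ → ℂ) (hb : IsToySolution N I b) :
    ∀ t ∈ I, ∀ t' ∈ I,
      hToy N (b t) = hToy N (b t') ∧ massToy N (b t) = massToy N (b t') :=
  fun _ ht _ ht' =>
    ⟨hI.eq_of_hasDerivAt_eq_zero (fun _ hs => hb.hasDerivAt_hToy hs) ht ht',
      hI.eq_of_hasDerivAt_eq_zero (fun _ hs => hb.hasDerivAt_massToy hs) ht ht'⟩

end
end

section
/- Let Λ ⊂ ℤ² be a finite set satisfying condition (1_Λ), and let β : I → ℓ¹(ℤ²;ℂ) be continuous in ℓ¹, coordinatewise C¹, and solve −i (d/dt) β_n = −β_n |β_n|² + Σ_{(n₁,n₂,n₃)∈A(n)} β_{n₁} conj(β_{n₂}) β_{n₃} for all n ∈ ℤ², with 0 ∈ I. If β_n(0) = 0 for every n ∉ Λ, then β_n(t) = 0 for every n ∉ Λ and every t ∈ I. If moreover Λ = Λ₁ ∪ … ∪ Λ_N satisfies conditions (2_Λ)–(5_Λ), then for every n ∈ Λ one has −i (d/dt) β_n = −β_n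 |β_n|² + 2 β_{n_child₁} β_{n_child₂} conj(β_{n_spouse}) + 2 β_{n_parent₁} β_{n_parent₂} conj(β_{n_sibling}), where the children terms are absent for n ∈ Λ_N and the parent terms are absent for n ∈ Λ₁. -/
/-! STATEMENT 12: invariance of the support Λ for the gauged resonant system, and the reduced finite system on Λ. -/

noncomputable section

open Complex

/-- a finite set `Λ ⊂ ℤ²` satisfies the closure condition `1_Λ` -/
def ClosedSet (Λ : Finset Z2) : Prop :=
  ∀ n₁ n₂ n₃ n : Z2, n₁ ∈ Λ → n₂ ∈ Λ → n₃ ∈ Λ → memA n₁ n₂ n₃ n → n ∈ Λ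

open scoped Classical in
/-- the `A(n)`-restricted cubic sum -/
def resSum (g : Z2 → ℂ) (n : Z2) : ℂ :=
  ∑' p : Z2 × Z2 × Z2,
    if memA p.1 p.2.1 p.2.2 n then
      g p.1 * (starRingEnd ℂ) (g p.2.1) * g p.2.2
    else 0

/-! The mass `μ t = ∑_{n ∉ Λ} |β_n t|` obeys a linear integral inequality. By closedness of `Λ`,
every triple of `A(n)` with `n ∉ Λ` has a vertex outside `Λ`, so
`∑_{n ∉ Λ} |∑_{A(n)} β_{n₁} conj(β_{n₂}) β_{n₃}| ≤ 3 ‖β‖₁² μ`, and the mean value inequality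
(applied to finite truncations, viewed as curves in `ℓ¹`) gives `μ t ≤ K ∫₀ᵗ μ` for `t ≥ 0`;
Grönwall forces `μ ≡ 0`, and reversing time handles `t ≤ 0`.

Once `β` lives on `Λ`, only triples inside `Λ` contribute to the resonant sum at `n ∈ Λ_j`.
By `5_Λ` they are nuclear families, by `2_Λ` and `3_Λ` they are the two orientations of the
(children, spouse) triple and of the (parents, sibling) triple of `n`, and by `4_Λ` these two
pairs are distinct; each orientation contributes once, whence the factor `2`. -/

open MeasureTheory Set Function
open scoped ENNReal

theorem eq_zero_of_le_mul_integral {u : ℝ → ℝ} {K T : ℝ} (hK : 0 ≤ K)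
    (hu : ContinuousOn u (Icc 0 T)) (hu0 : ∀ t ∈ Icc 0 T, 0 ≤ u t)
    (hle : ∀ t ∈ Icc 0 T, u t ≤ K * ∫ s in (0)..t, u s) :
    ∀ t ∈ Icc 0 T, u t = 0 := by
  intro t ht
  have hT : 0 ≤ T := ht.1.trans ht.2
  -- `u` clamped to `[0, T]` is continuous on `ℝ`, so its primitive is differentiable everywhere
  set v : ℝ → ℝ := fun s => u (projIcc 0 T hT s)
  have hv : Continuous v := hu.comp_continuous (continuous_subtype_val.comp continuous_projIcc)
    fun s => (projIcc 0 T hT s).2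
  have hvu : ∀ s ∈ Icc 0 T, v s = u s := fun s hs => by simp [v, projIcc_of_mem hT hs]
  have hint : ∀ s ∈ Icc 0 T, ∫ r in (0)..s, v r = ∫ r in (0)..s, u r := fun s hs =>
    intervalIntegral.integral_congr fun r hr => by
      rw [uIcc_of_le hs.1] at hr
      exact hvu r ⟨hr.1, hr.2.trans hs.2⟩
  have hprim : ∀ s, HasDerivAt (fun s => ∫ r in (0)..s, v r) (v s) s := fun s =>
    (hv.integral_hasStrictDerivAt 0 s).hasDerivAt
  have hzero := eq_zero_of_abs_deriv_le_mul_abs_self_of_eq_zero_right (K := K)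
    (fun s _ => (hprim s).continuousAt.continuousWithinAt) (fun s _ => (hprim s).hasDerivWithinAt)
    intervalIntegral.integral_same fun s hs => by
      have hs' : s ∈ Icc 0 T := Ico_subset_Icc_self hs
      rw [Real.norm_eq_abs, Real.norm_eq_abs, hvu s hs', abs_of_nonneg (hu0 s hs'), hint s hs']
      exact (hle s hs').trans (mul_le_mul_of_nonneg_left (le_abs_self _) hK)
  refine le_antisymm ?_ (hu0 t ht)
  simpa [← hint t ht, hzero t ht] using hle t ht

theorem sum_norm_sub_le_integral {ι E : Type*} [NormedAddCommGroup E] [NormedSpace ℝ E]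
    {f f' : ℝ → ι → E} {B : ℝ → ℝ} {a b : ℝ} (hab : a ≤ b) (S : Finset ι)
    (hf : ∀ t ∈ Icc a b, ∀ i, HasDerivAt (fun s => f s i) (f' t i) t)
    (hB : ∀ t ∈ Ioo a b, ∑ i ∈ S, ‖f' t i‖ ≤ B t) (hBi : IntervalIntegrable B volume a b) :
    ∑ i ∈ S, ‖f b i - f a i‖ ≤ ∫ t in a..b, B t := by
  -- the finite family `(f t i)_{i ∈ S}` is a curve in `ℓ¹(S; E)`
  set F : ℝ → PiLp 1 (fun _ : S => E) := fun t => WithLp.toLp 1 fun i => f t i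
  have hF : ∀ t ∈ Icc a b, HasDerivAt F (WithLp.toLp 1 fun i => f' t i) t := fun t ht =>
    (PiLp.continuousLinearEquiv 1 ℝ (fun _ : S => E)).symm.hasFDerivAt.comp_hasDerivAt t
      (hasDerivAt_pi.2 fun i => hf t ht i)
  have hmv := norm_sub_le_integral_of_norm_deriv_le_of_le hab
    (fun t ht => (hF t ht).continuousAt.continuousWithinAt)
    (fun t ht => (hF t (Ioo_subset_Icc_self ht)).differentiableAt.differentiableWithinAt)
    (ae_of_all _ fun t ht => by
      rw [(hF t (Ioo_subset_Icc_self ht)).deriv, PiLp.norm_eq_of_L1]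
      simpa [Finset.sum_attach S fun i => ‖f' t i‖] using hB t ht) hBi
  simpa [F, PiLp.norm_eq_of_L1, Finset.sum_attach S fun i => ‖f b i - f a i‖] using hmv

theorem eq_zero_on_Icc_of_sum_norm_deriv_le {ι E : Type*} [NormedAddCommGroup E]
    [NormedSpace ℝ E] {x x' : ℝ → ι → E} {K T : ℝ} (hK : 0 ≤ K)
    (hx : ∀ t ∈ Icc 0 T, ∀ i, HasDerivAt (fun s => x s i) (x' t i) t)
    (hsum : ∀ t ∈ Icc 0 T, Summable fun i => ‖x t i‖)
    (hcont : ContinuousOn (fun t => ∑' i, ‖x t i‖) (Icc 0 T))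
    (hbound : ∀ t ∈ Icc 0 T, ∀ S : Finset ι, ∑ i ∈ S, ‖x' t i‖ ≤ K * ∑' i, ‖x t i‖)
    (h0 : x 0 = 0) :
    ∀ t ∈ Icc 0 T, x t = 0 := by
  have hmass : ∀ t ∈ Icc 0 T, ∑' i, ‖x t i‖ ≤ K * ∫ s in (0)..t, ∑' i, ‖x s i‖ := by
    intro t ht
    have hsub : Icc 0 t ⊆ Icc 0 T := Icc_subset_Icc_right ht.2
    refine Real.tsum_le_of_sum_le (fun i => norm_nonneg _) fun S => ?_
    have hS := sum_norm_sub_le_integral ht.1 S (fun s hs => hx s (hsub hs))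
      (fun s hs => hbound s (hsub (Ioo_subset_Icc_self hs)) S)
      (((hcont.mono hsub).intervalIntegrable_of_Icc ht.1).const_mul K)
    simpa [h0, intervalIntegral.integral_const_mul] using hS
  have hzero := eq_zero_of_le_mul_integral hK hcont
    (fun t _ => tsum_nonneg fun i => norm_nonneg _) hmass
  intro t ht
  funext i
  exact norm_le_zero_iff.1 <|
    ((hsum t ht).le_tsum i fun j _ => norm_nonneg _).trans (hzero t ht).le

theorem eq_zero_of_sum_norm_deriv_le {ι E : Type*} [NormedAddCommGroup E]
    [NormedSpace ℝ E] {x x' : ℝ → ι → E} {K T : ℝ} (hK : 0 ≤ K)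
    (hx : ∀ t ∈ uIcc 0 T, ∀ i, HasDerivAt (fun s => x s i) (x' t i) t)
    (hsum : ∀ t ∈ uIcc 0 T, Summable fun i => ‖x t i‖)
    (hcont : ContinuousOn (fun t => ∑' i, ‖x t i‖) (uIcc 0 T))
    (hbound : ∀ t ∈ uIcc 0 T, ∀ S : Finset ι, ∑ i ∈ S, ‖x' t i‖ ≤ K * ∑' i, ‖x t i‖)
    (h0 : x 0 = 0) :
    x T = 0 := by
  rcases le_total 0 T with hT | hT
  · rw [uIcc_of_le hT] at hx hsum hcont hbound
    exact eq_zero_on_Icc_of_sum_norm_deriv_le hK hx hsum hcont hbound h0 T ⟨hT, le_rfl⟩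
  · rw [uIcc_of_ge hT] at hx hsum hcont hbound
    have hneg : MapsTo (fun t : ℝ => -t) (Icc 0 (-T)) (Icc T 0) := fun t ht =>
      ⟨by linarith [ht.2], by linarith [ht.1]⟩
    have hrev := eq_zero_on_Icc_of_sum_norm_deriv_le (x := fun t => x (-t))
      (x' := fun t => -x' (-t)) hK
      (fun t ht i => by simpa [comp_def] using (hx (-t) (hneg ht) i).scomp t (hasDerivAt_neg' t))
      (fun t ht => hsum (-t) (hneg ht)) (hcont.comp continuousOn_neg hneg)
      (fun t ht S => by simpa using hbound (-t) (hneg ht) S) (by simpa using h0)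
      (-T) ⟨by linarith, le_rfl⟩
    simpa using hrev

theorem ENNReal.tsum_triple_mul {ι : Type*} (a b c : ι → ℝ≥0∞) :
    ∑' p : ι × ι × ι, a p.1 * b p.2.1 * c p.2.2 = (∑' i, a i) * (∑' i, b i) * ∑' i, c i := by
  simp only [ENNReal.tsum_prod', mul_assoc, ENNReal.tsum_mul_left, ENNReal.tsum_mul_right]

open scoped Classical in
def resTerm (g : Z2 → ℂ) (n : Z2) (p : Z2 × Z2 × Z2) : ℂ :=
  if memA p.1 p.2.1 p.2.2 n then g p.1 * (starRingEnd ℂ) (g p.2.1) * g p.2.2 else 0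

theorem resSum_eq_tsum_resTerm (g : Z2 → ℂ) (n : Z2) : resSum g n = ∑' p, resTerm g n p := rfl

theorem ClosedSet.exists_notMem {Λ : Finset Z2} (hΛ : ClosedSet Λ) {n₁ n₂ n₃ n : Z2}
    (h : memA n₁ n₂ n₃ n) (hn : n ∉ Λ) : n₁ ∉ Λ ∨ n₂ ∉ Λ ∨ n₃ ∉ Λ := by
  by_contra! hmem
  exact hn (hΛ _ _ _ _ hmem.1 hmem.2.1 hmem.2.2 h)

theorem tsum_enorm_resSum_le {Λ : Finset Z2} (hΛ : ClosedSet Λ) (g : Z2 → ℂ) :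
    ∑' n : ↥((Λ : Set Z2)ᶜ), ‖resSum g n‖ₑ
      ≤ 3 * (∑' m, ‖g m‖ₑ) ^ 2 * ∑' n : ↥((Λ : Set Z2)ᶜ), ‖g n‖ₑ := by
  classical
  set χ : Z2 → ℝ≥0∞ := (Λ : Set Z2)ᶜ.indicator 1
  set a : Z2 → ℝ≥0∞ := fun m => ‖g m‖ₑ
  set e : Z2 → ℝ≥0∞ := fun m => χ m * a m
  have hterm : ∀ n, (Λ : Set Z2)ᶜ.indicator (fun n => ‖resSum g n‖ₑ) n ≤
      ∑' p : Z2 × Z2 × Z2, if n = p.1 - p.2.1 + p.2.2 then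
        (χ p.1 + χ p.2.1 + χ p.2.2) * (a p.1 * a p.2.1 * a p.2.2) else 0 := by
    intro n
    by_cases hn : n ∈ Λ
    · simp [hn]
    rw [indicator_of_mem (by simpa using hn), resSum_eq_tsum_resTerm]
    refine enorm_tsum_le_tsum_enorm.trans (ENNReal.tsum_le_tsum fun p => ?_)
    by_cases hp : memA p.1 p.2.1 p.2.2 n
    · have hχ : 1 ≤ χ p.1 + χ p.2.1 + χ p.2.2 := by
        rcases hΛ.exists_notMem hp hn with h | h | h
        · exact le_add_right (le_add_right (by simp [χ, h]))
        · exact le_add_right (le_add_left (by simp [χ, h]))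
        · exact le_add_left (by simp [χ, h])
      calc ‖resTerm g n p‖ₑ = a p.1 * a p.2.1 * a p.2.2 := by simp [resTerm, hp, a]
        _ ≤ _ := by rw [if_pos hp.1.symm]; exact le_mul_of_one_le_left' hχ
    · simp [resTerm, hp]
  have he : ∑' m, e m = ∑' n : ↥((Λ : Set Z2)ᶜ), ‖g n‖ₑ := by
    rw [tsum_subtype _ fun n => ‖g n‖ₑ]
    exact tsum_congr fun m => by by_cases hm : m ∈ Λ <;> simp [e, χ, a, hm]
  rw [tsum_subtype _ fun n => ‖resSum g n‖ₑ, ← he]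
  calc ∑' n, (Λ : Set Z2)ᶜ.indicator (fun n => ‖resSum g n‖ₑ) n
      ≤ ∑' (n) (p : Z2 × Z2 × Z2), if n = p.1 - p.2.1 + p.2.2 then
          (χ p.1 + χ p.2.1 + χ p.2.2) * (a p.1 * a p.2.1 * a p.2.2) else 0 :=
        ENNReal.tsum_le_tsum hterm
    _ = ∑' p : Z2 × Z2 × Z2, (e p.1 * a p.2.1 * a p.2.2 + a p.1 * e p.2.1 * a p.2.2
          + a p.1 * a p.2.1 * e p.2.2) := by
        rw [ENNReal.tsum_comm]
        exact tsum_congr fun p => by rw [tsum_ite_eq]; ring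
    _ = _ := by
        rw [ENNReal.tsum_add, ENNReal.tsum_add, ENNReal.tsum_triple_mul,
          ENNReal.tsum_triple_mul, ENNReal.tsum_triple_mul]
        ring

theorem sum_norm_resSum_le {Λ : Finset Z2} (hΛ : ClosedSet Λ) {g : Z2 → ℂ}
    (hg : Summable fun m => ‖g m‖) (S : Finset ↥((Λ : Set Z2)ᶜ)) :
    ∑ n ∈ S, ‖resSum g n‖ ≤ 3 * (∑' m, ‖g m‖) ^ 2 * ∑' n : ↥((Λ : Set Z2)ᶜ), ‖g n‖ := by
  have hg' : Summable fun n : ↥((Λ : Set Z2)ᶜ) => ‖g n‖ := hg.subtype _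
  rw [← ENNReal.ofReal_le_ofReal_iff (by positivity), ENNReal.ofReal_sum_of_nonneg
    (fun _ _ => norm_nonneg _), ENNReal.ofReal_mul (by positivity),
    ENNReal.ofReal_mul (by norm_num), ENNReal.ofReal_pow (by positivity),
    ENNReal.ofReal_tsum_of_nonneg (fun _ => norm_nonneg _) hg,
    ENNReal.ofReal_tsum_of_nonneg (fun _ => norm_nonneg _) hg']
  simp only [ofReal_norm, ENNReal.ofReal_ofNat]
  exact (ENNReal.sum_le_tsum S).trans (tsum_enorm_resSum_le hΛ g)

def gaugedResonantField (g : Z2 → ℂ) (n : Z2) : ℂ :=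
  -(g n) * (‖g n‖ : ℂ) ^ 2 + resSum g n

theorem sum_norm_gaugedResonantField_le {Λ : Finset Z2} (hΛ : ClosedSet Λ) {g : Z2 → ℂ}
    (hg : Summable fun m => ‖g m‖) {B : ℝ} (hB : ∑' m, ‖g m‖ ≤ B)
    (S : Finset ↥((Λ : Set Z2)ᶜ)) :
    ∑ n ∈ S, ‖gaugedResonantField g n‖ ≤ 4 * B ^ 2 * ∑' n : ↥((Λ : Set Z2)ᶜ), ‖g n‖ := by
  have hg' : Summable fun n : ↥((Λ : Set Z2)ᶜ) => ‖g n‖ := hg.subtype _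
  have hB0 : 0 ≤ ∑' m, ‖g m‖ := tsum_nonneg fun _ => norm_nonneg _
  have hμ0 : 0 ≤ ∑' n : ↥((Λ : Set Z2)ᶜ), ‖g n‖ := tsum_nonneg fun _ => norm_nonneg _
  have hcubic : ∀ n, ‖g n‖ ^ 3 ≤ B ^ 2 * ‖g n‖ := fun n => by
    have hn : ‖g n‖ ≤ B := (hg.le_tsum n fun _ _ => norm_nonneg _).trans hB
    nlinarith [norm_nonneg (g n), mul_le_mul hn hn (norm_nonneg _) (hB0.trans hB)]
  have hfield : ∀ n, ‖gaugedResonantField g n‖ ≤ B ^ 2 * ‖g n‖ + ‖resSum g n‖ := fun n => by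
    refine (norm_add_le _ _).trans (add_le_add ?_ le_rfl)
    simpa [norm_mul, pow_succ, mul_assoc] using hcubic n
  calc ∑ n ∈ S, ‖gaugedResonantField g n‖
      ≤ B ^ 2 * ∑ n ∈ S, ‖g n‖ + ∑ n ∈ S, ‖resSum g n‖ := by
        rw [Finset.mul_sum, ← Finset.sum_add_distrib]
        exact Finset.sum_le_sum fun n _ => hfield n
    _ ≤ B ^ 2 * ∑' n : ↥((Λ : Set Z2)ᶜ), ‖g n‖
          + 3 * (∑' m, ‖g m‖) ^ 2 * ∑' n : ↥((Λ : Set Z2)ᶜ), ‖g n‖ :=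
        add_le_add (mul_le_mul_of_nonneg_left (hg'.sum_le_tsum S fun _ _ => norm_nonneg _)
          (sq_nonneg B)) (sum_norm_resSum_le hΛ hg S)
    _ ≤ 4 * B ^ 2 * ∑' n : ↥((Λ : Set Z2)ᶜ), ‖g n‖ := by
        nlinarith [mul_le_mul hB hB hB0 (hB0.trans hB)]

theorem continuousOn_tsum_norm_comp {ι κ : Type*} {β : ℝ → ι → ℂ} {I : Set ℝ} {e : κ → ι}
    (he : Injective e) (hl1 : ∀ t ∈ I, Summable fun i => ‖β t i‖)
    (hcont : ∀ t₀ ∈ I, ∀ ε : ℝ, 0 < ε → ∃ η : ℝ, 0 < η ∧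
      ∀ t ∈ I, |t - t₀| < η → (∑' i, ‖β t i - β t₀ i‖) < ε) :
    ContinuousOn (fun t => ∑' k, ‖β t (e k)‖) I := by
  have hlip : ∀ t ∈ I, ∀ s ∈ I,
      ∑' k, ‖β t (e k)‖ ≤ ∑' k, ‖β s (e k)‖ + ∑' i, ‖β t i - β s i‖ := by
    intro t ht s hs
    have hd : Summable fun i => ‖β t i - β s i‖ :=
      ((hl1 t ht).add (hl1 s hs)).of_nonneg_of_le (fun _ => norm_nonneg _)
        fun _ => norm_sub_le _ _
    calc ∑' k, ‖β t (e k)‖ ≤ ∑' k, (‖β s (e k)‖ + ‖β t (e k) - β s (e k)‖) :=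
          ((hl1 t ht).comp_injective he).tsum_le_tsum (fun k => norm_le_insert' _ _)
            (((hl1 s hs).comp_injective he).add (hd.comp_injective he))
      _ = ∑' k, ‖β s (e k)‖ + ∑' k, ‖β t (e k) - β s (e k)‖ :=
          ((hl1 s hs).comp_injective he).tsum_add (hd.comp_injective he)
      _ ≤ _ := add_le_add le_rfl (tsum_comp_le_tsum_of_inj hd (fun _ => norm_nonneg _) he)
  rw [Metric.continuousOn_iff]
  intro t₀ ht₀ ε hε
  obtain ⟨η, hη, hclose⟩ := hcont t₀ ht₀ ε hε
  refine ⟨η, hη, fun t ht hdist => ?_⟩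
  have hlt := hclose t ht hdist
  have hsymm : ∑' i, ‖β t₀ i - β t i‖ = ∑' i, ‖β t i - β t₀ i‖ :=
    tsum_congr fun i => norm_sub_rev _ _
  rw [Real.dist_eq, abs_sub_lt_iff]
  constructor <;> linarith [hlip t ht t₀ ht₀, hlip t₀ ht₀ t ht]

theorem ClosedSet.eq_zero_of_notMem_of_hasDerivAt {Λ : Finset Z2} (hΛ : ClosedSet Λ) {I : Set ℝ}
    (hI : I.OrdConnected) (h0 : (0 : ℝ) ∈ I) (c : ℂ) (β : ℝ → Z2 → ℂ)
    (hl1 : ∀ t ∈ I, Summable (fun n : Z2 => ‖β t n‖))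
    (hcont : ∀ t₀ ∈ I, ∀ ε : ℝ, 0 < ε → ∃ η : ℝ, 0 < η ∧
      ∀ t ∈ I, |t - t₀| < η → (∑' n : Z2, ‖β t n - β t₀ n‖) < ε)
    (hode : ∀ t ∈ I, ∀ n : Z2,
      HasDerivAt (fun s => β s n) (c * gaugedResonantField (β t) n) t)
    (hsupp : ∀ n : Z2, n ∉ Λ → β 0 n = 0) :
    ∀ t ∈ I, ∀ n : Z2, n ∉ Λ → β t n = 0 := by
  intro T hT n hn
  have hsub : uIcc 0 T ⊆ I := hI.uIcc_subset h0 hT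
  obtain ⟨B, hB⟩ := isCompact_uIcc.bddAbove_image
    ((continuousOn_tsum_norm_comp injective_id hl1 hcont).mono hsub)
  have hzero := eq_zero_of_sum_norm_deriv_le (x := fun t (i : ↥((Λ : Set Z2)ᶜ)) => β t i)
    (x' := fun t i => c * gaugedResonantField (β t) i) (K := ‖c‖ * (4 * B ^ 2)) (by positivity)
    (fun t ht i => hode t (hsub ht) i) (fun t ht => (hl1 t (hsub ht)).subtype _)
    ((continuousOn_tsum_norm_comp Subtype.val_injective hl1 hcont).mono hsub)
    (fun t ht S => by
      simpa [norm_mul, ← Finset.mul_sum, mul_assoc] using mul_le_mul_of_nonneg_left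
        (sum_norm_gaugedResonantField_le hΛ (hl1 t (hsub ht)) (hB (mem_image_of_mem _ ht)) S)
        (norm_nonneg c))
    (funext fun i => hsupp i i.2)
  exact congrFun hzero ⟨n, hn⟩

theorem not_memA_self (a b n : Z2) : ¬ memA a b a n := by
  rintro ⟨hlin, hsq, hne, -⟩
  -- `n = 2a - b` and `|n|² = 2|a|² - |b|²` force `|a - b|² = 0`
  obtain rfl : n = (2 * a.1 - b.1, 2 * a.2 - b.2) := by
    rw [← hlin]
    ext <;> simp only [Prod.fst_add, Prod.fst_sub, Prod.snd_add, Prod.snd_sub] <;> ring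
  simp only [sqz] at hsq
  have h1 : a.1 = b.1 := by nlinarith [sq_nonneg (a.1 - b.1), sq_nonneg (a.2 - b.2)]
  have h2 : a.2 = b.2 := by nlinarith [sq_nonneg (a.1 - b.1), sq_nonneg (a.2 - b.2)]
  exact hne (Prod.ext (show a.1 = 2 * a.1 - b.1 by omega) (show a.2 = 2 * a.2 - b.2 by omega))

theorem memA.symm {a b c n : Z2} (h : memA a b c n) : memA c b a n := by
  obtain ⟨hlin, hsq, hna, hnc⟩ := h
  exact ⟨by rw [← hlin]; abel, by rw [← hsq]; ring, hnc, hna⟩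

theorem mem_lamUnion {N : ℕ} {Lam : ℕ → Finset Z2} {j : ℕ} (hj1 : 1 ≤ j) (hjN : j ≤ N)
    {n : Z2} (hn : n ∈ Lam j) : n ∈ LamUnion N Lam :=
  Finset.mem_biUnion.2 ⟨j, Finset.mem_Icc.2 ⟨hj1, hjN⟩, hn⟩

namespace LamDisjoint

variable {N : ℕ} {Lam : ℕ → Finset Z2}

theorem eq_of_mem_s12 (hdisj : LamDisjoint N Lam) {i k : ℕ} (hi1 : 1 ≤ i) (hiN : i ≤ N)
    (hk1 : 1 ≤ k) (hkN : k ≤ N) {a : Z2} (hai : a ∈ Lam i) (hak : a ∈ Lam k) : i = k := by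
  by_contra hik
  exact Finset.disjoint_left.1
    (hdisj i (Finset.mem_Icc.2 ⟨hi1, hiN⟩) k (Finset.mem_Icc.2 ⟨hk1, hkN⟩) hik) hai hak

theorem parent_ne_child (hdisj : LamDisjoint N Lam) {n₁ n₂ n₃ n₄ : Z2}
    (h : NuclearFamily N Lam n₁ n₂ n₃ n₄) : n₁ ≠ n₂ ∧ n₁ ≠ n₄ ∧ n₃ ≠ n₂ ∧ n₃ ≠ n₄ := by
  obtain ⟨-, j, hj1, hjN, h₁, h₃, h₂, h₄⟩ := h
  have hne : ∀ {a b : Z2}, a ∈ Lam j → b ∈ Lam (j + 1) → a ≠ b := fun ha hb hab => by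
    have := hdisj.eq_of_mem_s12 hj1 hjN.le (by omega) hjN ha (hab ▸ hb)
    omega
  exact ⟨hne h₁ h₂, hne h₁ h₄, hne h₃ h₂, hne h₃ h₄⟩

theorem swap_children (hdisj : LamDisjoint N Lam) {n₁ n₂ n₃ n₄ : Z2}
    (h : NuclearFamily N Lam n₁ n₂ n₃ n₄) : NuclearFamily N Lam n₁ n₄ n₃ n₂ := by
  obtain ⟨h12, -, h32, -⟩ := hdisj.parent_ne_child h
  obtain ⟨⟨hlin, hsq, -, -⟩, j, hj1, hjN, h₁, h₃, h₂, h₄⟩ := h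
  exact ⟨⟨by rw [← hlin]; abel, by rw [← hsq]; ring, h12, h32⟩, j, hj1, hjN, h₁, h₃, h₄, h₂⟩

theorem swap_parents (hdisj : LamDisjoint N Lam) {n₁ n₂ n₃ n₄ : Z2}
    (h : NuclearFamily N Lam n₁ n₂ n₃ n₄) : NuclearFamily N Lam n₃ n₂ n₁ n₄ := by
  obtain ⟨-, h14, -, h34⟩ := hdisj.parent_ne_child h
  obtain ⟨⟨hlin, hsq, -, -⟩, j, hj1, hjN, h₁, h₃, h₂, h₄⟩ := h
  exact ⟨⟨by rw [← hlin]; abel, by rw [← hsq]; ring, h34, h14⟩, j, hj1, hjN, h₃, h₁, h₂, h₄⟩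

theorem memA_children (hdisj : LamDisjoint N Lam) {n₁ n₂ n₃ n₄ : Z2}
    (h : NuclearFamily N Lam n₁ n₂ n₃ n₄) : memA n₂ n₃ n₄ n₁ := by
  obtain ⟨h12, h14, -, -⟩ := hdisj.parent_ne_child h
  obtain ⟨⟨hlin, hsq, -, -⟩, -⟩ := h
  exact ⟨by rw [← hlin]; abel, by rw [← hsq]; ring, h12.symm, h14.symm⟩

theorem memA_parents (hdisj : LamDisjoint N Lam) {n₁ n₂ n₃ n₄ : Z2}
    (h : NuclearFamily N Lam n₁ n₂ n₃ n₄) : memA n₁ n₄ n₃ n₂ :=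
  (hdisj.swap_children h).1

end LamDisjoint

def familyTriples (a b c : Z2) : Finset (Z2 × Z2 × Z2) := {(a, b, c), (c, b, a)}

section Uniqueness

variable {N : ℕ} {Lam : ℕ → Finset Z2} {a b c a' b' c' n : Z2} {j : ℕ}

theorem Cond2.mem_familyTriples (hc2 : Cond2 N Lam) (hj1 : 1 ≤ j) (hjN : j < N)
    (hn : n ∈ Lam j) (h : NuclearFamily N Lam n a b c) (h' : NuclearFamily N Lam n a' b' c') :
    (a', b', c') ∈ familyTriples a b c := by
  obtain ⟨w₂, w₃, w₄, -, huniq⟩ := hc2 j hj1 hjN n hn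
  obtain ⟨rfl, e⟩ := huniq _ _ _ h
  obtain ⟨rfl, e'⟩ := huniq _ _ _ h'
  rcases e with ⟨rfl, rfl⟩ | ⟨rfl, rfl⟩ <;> rcases e' with ⟨rfl, rfl⟩ | ⟨rfl, rfl⟩ <;>
    simp [familyTriples]

theorem Cond3.mem_familyTriples (hc3 : Cond3 N Lam) (hj1 : 1 ≤ j) (hjN : j < N)
    (hn : n ∈ Lam (j + 1)) (h : NuclearFamily N Lam a n c b)
    (h' : NuclearFamily N Lam a' n c' b') :
    (a', b', c') ∈ familyTriples a b c := by
  obtain ⟨w₁, w₃, w₄, -, huniq⟩ := hc3 j hj1 hjN n hn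
  obtain ⟨rfl, e⟩ := huniq _ _ _ h
  obtain ⟨rfl, e'⟩ := huniq _ _ _ h'
  rcases e with ⟨rfl, rfl⟩ | ⟨rfl, rfl⟩ <;> rcases e' with ⟨rfl, rfl⟩ | ⟨rfl, rfl⟩ <;>
    simp [familyTriples]

end Uniqueness

section NuclearSystem

variable {N : ℕ} {Lam : ℕ → Finset Z2} {spouse child₁ child₂ sibling parent₁ parent₂ : Z2 → Z2}
  {j : ℕ} {n : Z2}

theorem mem_familyTriples_of_memA (hdisj : LamDisjoint N Lam) (hc2 : Cond2 N Lam)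
    (hc3 : Cond3 N Lam) (hc5 : Cond5 N Lam)
    (hch : ∀ j : ℕ, 1 ≤ j → j < N → ∀ n ∈ Lam j,
      NuclearFamily N Lam n (child₁ n) (spouse n) (child₂ n))
    (hpar : ∀ j : ℕ, 1 ≤ j → j < N → ∀ n ∈ Lam (j + 1),
      NuclearFamily N Lam (parent₁ n) n (parent₂ n) (sibling n))
    (hj1 : 1 ≤ j) (hjN : j ≤ N) (hn : n ∈ Lam j) {p : Z2 × Z2 × Z2}
    (hp : memA p.1 p.2.1 p.2.2 n) (h₁ : p.1 ∈ LamUnion N Lam) (h₂ : p.2.1 ∈ LamUnion N Lam)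
    (h₃ : p.2.2 ∈ LamUnion N Lam) :
    (j < N ∧ p ∈ familyTriples (child₁ n) (spouse n) (child₂ n)) ∨
      (2 ≤ j ∧ p ∈ familyTriples (parent₁ n) (sibling n) (parent₂ n)) := by
  obtain ⟨p₁, p₂, p₃⟩ := p
  rcases hc5 p₁ p₂ p₃ n h₁ h₂ h₃ (mem_lamUnion hj1 hjN hn) hp with hfam | hfam
  · obtain ⟨-, k, hk1, hkN, -, -, -, hnk⟩ := id hfam
    obtain rfl := hdisj.eq_of_mem_s12 hj1 hjN (by omega) hkN hn hnk
    exact Or.inr ⟨by omega, hc3.mem_familyTriples hk1 hkN hn (hpar k hk1 hkN n hn)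
      (hdisj.swap_children hfam)⟩
  · obtain ⟨-, k, hk1, hkN, -, hnk, -, -⟩ := id hfam
    obtain rfl := hdisj.eq_of_mem_s12 hj1 hjN hk1 hkN.le hn hnk
    exact Or.inl ⟨hkN, hc2.mem_familyTriples hj1 hkN hn (hch j hj1 hkN n hn)
      (hdisj.swap_parents hfam)⟩

theorem memA_of_resTerm_ne_zero {g : Z2 → ℂ} {p : Z2 × Z2 × Z2} (h : resTerm g n p ≠ 0) :
    memA p.1 p.2.1 p.2.2 n ∧ g p.1 ≠ 0 ∧ g p.2.1 ≠ 0 ∧ g p.2.2 ≠ 0 := by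
  unfold resTerm at h
  split_ifs at h with hA
  · refine ⟨hA, ?_, ?_, ?_⟩ <;> rintro h0 <;> simp [h0] at h
  · exact absurd rfl h

theorem sum_familyTriples_resTerm (g : Z2 → ℂ) {a b c : Z2} (h : memA a b c n) :
    ∑ p ∈ familyTriples a b c, resTerm g n p = 2 * g a * g c * (starRingEnd ℂ) (g b) := by
  have hac : a ≠ c := by
    rintro rfl
    exact not_memA_self a b n h
  rw [familyTriples, Finset.sum_pair (by simp [hac]), resTerm, resTerm, if_pos h, if_pos h.symm]
  ring

theorem resSum_eq_of_nuclearFamilies (hdisj : LamDisjoint N Lam) (hc2 : Cond2 N Lam)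
    (hc3 : Cond3 N Lam) (hc4 : Cond4 N Lam) (hc5 : Cond5 N Lam)
    (hch : ∀ j : ℕ, 1 ≤ j → j < N → ∀ n ∈ Lam j,
      NuclearFamily N Lam n (child₁ n) (spouse n) (child₂ n))
    (hpar : ∀ j : ℕ, 1 ≤ j → j < N → ∀ n ∈ Lam (j + 1),
      NuclearFamily N Lam (parent₁ n) n (parent₂ n) (sibling n))
    (hj1 : 1 ≤ j) (hjN : j ≤ N) (hn : n ∈ Lam j) {g : Z2 → ℂ}
    (hg : ∀ m, m ∉ LamUnion N Lam → g m = 0) :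
    resSum g n =
      (if j < N then 2 * g (child₁ n) * g (child₂ n) * (starRingEnd ℂ) (g (spouse n)) else 0)
      + (if 2 ≤ j then 2 * g (parent₁ n) * g (parent₂ n) * (starRingEnd ℂ) (g (sibling n))
        else 0) := by
  classical
  set C := familyTriples (child₁ n) (spouse n) (child₂ n)
  set P := familyTriples (parent₁ n) (sibling n) (parent₂ n)
  have hparent : 2 ≤ j → NuclearFamily N Lam (parent₁ n) n (parent₂ n) (sibling n) := by
    intro hj
    obtain ⟨k, rfl⟩ : ∃ k, j = k + 1 := ⟨j - 1, by omega⟩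
    exact hpar k (by omega) (by omega) n hn
  have hsupp : ∀ p ∉ (if j < N then C else ∅) ∪ (if 2 ≤ j then P else ∅),
      resTerm g n p = 0 := by
    intro p hp
    by_contra hne
    obtain ⟨hA, h₁, h₂, h₃⟩ := memA_of_resTerm_ne_zero hne
    have hΛ : ∀ m, g m ≠ 0 → m ∈ LamUnion N Lam := fun m hm => by_contra fun h => hm (hg m h)
    rcases mem_familyTriples_of_memA hdisj hc2 hc3 hc5 hch hpar hj1 hjN hn hA (hΛ _ h₁) (hΛ _ h₂)
      (hΛ _ h₃) with ⟨hj, hpC⟩ | ⟨hj, hpP⟩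
    · exact hp (Finset.mem_union_left _ (by rwa [if_pos hj]))
    · exact hp (Finset.mem_union_right _ (by rwa [if_pos hj]))
  have hCP : Disjoint (if j < N then C else ∅) (if 2 ≤ j then P else ∅) := by
    split_ifs with hjN' hj2
    · have hss : sibling n ≠ spouse n := hc4 _ _ _ _ _ _ _ (hch j hj1 hjN' n hn) (hparent hj2)
      simp [C, P, familyTriples, hss]
    all_goals simp
  rw [resSum_eq_tsum_resTerm, tsum_eq_sum hsupp, Finset.sum_union hCP]
  congr 1 <;> split_ifs with h
  · exact sum_familyTriples_resTerm g (hdisj.memA_children (hch j hj1 h n hn))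
  · rfl
  · exact sum_familyTriples_resTerm g (hdisj.memA_parents (hparent h))
  · rfl

end NuclearSystem

theorem stmt12 (Λ : Finset Z2) (hΛ : ClosedSet Λ)
    (I : Set ℝ) (hI : I.OrdConnected) (h0 : (0 : ℝ) ∈ I)
    (β : ℝ → Z2 → ℂ)
    -- `β(t) ∈ ℓ¹` and `β` is continuous in `ℓ¹` on `I`
    (hl1 : ∀ t ∈ I, Summable (fun n : Z2 => ‖β t n‖))
    (hcont : ∀ t₀ ∈ I, ∀ ε : ℝ, 0 < ε → ∃ η : ℝ, 0 < η ∧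
      ∀ t ∈ I, |t - t₀| < η → (∑' n : Z2, ‖β t n - β t₀ n‖) < ε)
    -- `β` is coordinatewise `C¹` and solves the gauged resonant system
    (hode : ∀ t ∈ I, ∀ n : Z2,
      HasDerivAt (fun s => β s n)
        (Complex.I * (-(β t n) * (‖β t n‖ : ℂ) ^ 2 + resSum (β t) n)) t)
    (hsupp : ∀ n : Z2, n ∉ Λ → β 0 n = 0) :
    -- the support stays inside `Λ` for all times
    (∀ t ∈ I, ∀ n : Z2, n ∉ Λ → β t n = 0) ∧
    -- ... and if `Λ` is a union of generations satisfying `2_Λ`–`5_Λ`, the system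
    -- reduces to the nuclear-family system
    (∀ (N : ℕ) (Lam : ℕ → Finset Z2),
      Λ = LamUnion N Lam → LamDisjoint N Lam →
      Cond2 N Lam → Cond3 N Lam → Cond4 N Lam → Cond5 N Lam →
      ∀ spouse child₁ child₂ sibling parent₁ parent₂ : Z2 → Z2,
        (∀ j : ℕ, 1 ≤ j → j < N → ∀ n ∈ Lam j,
          NuclearFamily N Lam n (child₁ n) (spouse n) (child₂ n)) →
        (∀ j : ℕ, 1 ≤ j → j < N → ∀ n ∈ Lam (j + 1),
          NuclearFamily N Lam (parent₁ n) n (parent₂ n) (sibling n)) →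
        ∀ t ∈ I, ∀ j : ℕ, 1 ≤ j → j ≤ N → ∀ n ∈ Lam j,
          HasDerivAt (fun s => β s n)
            (Complex.I * (-(β t n) * (‖β t n‖ : ℂ) ^ 2
              + (if j < N then
                  2 * β t (child₁ n) * β t (child₂ n) * (starRingEnd ℂ) (β t (spouse n))
                else 0)
              + (if 2 ≤ j then
                  2 * β t (parent₁ n) * β t (parent₂ n) * (starRingEnd ℂ) (β t (sibling n))
                else 0))) t) := by
  have hinv : ∀ t ∈ I, ∀ n : Z2, n ∉ Λ → β t n = 0 :=
    hΛ.eq_zero_of_notMem_of_hasDerivAt hI h0 Complex.I β hl1 hcont hode hsupp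
  refine ⟨hinv, ?_⟩
  rintro N Lam rfl hdisj hc2 hc3 hc4 hc5 spouse child₁ child₂ sibling parent₁ parent₂ hch hpar
    t ht j hj1 hjN n hn
  rw [add_assoc, ← resSum_eq_of_nuclearFamilies hdisj hc2 hc3 hc4 hc5 hch hpar hj1 hjN hn
    (hinv t ht)]
  exact hode t ht n

end
end
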